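/- arXiv:2206.01526 — 6 statements merged into one kernel-verified Lean document; each statement's English description precedes it below -/
import Mathlib

section
/- For positive integers n, k, s with k ≥ 2 and n ≥ (s+1)(k + 1/2), the family A = all k-subsets of [(s+1)k - 1] is strictly smaller than the family B = all k-subsets of [n] meeting [s]; that is, C((s+1)k-1, k) < C(n,k) - C(n-s, k). -/
open Finset

private lemma convex_pair (m r : ℕ) (t : ℕ) :
    2 * Nat.choose (m + 1) (r + 1) ≤
      Nat.choose (m + 1 + t) (r + 1) + Nat.choose (m + 1 - t) (r + 1) := by
  induction t with
  | zero => simp; omega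
  | succ t ih =>
    rcases le_or_gt t m with hc | hc
    · have e1 : m + 1 - t = (m - t) + 1 := by omega
      rw [e1] at ih
      have e3 : Nat.choose ((m - t) + 1) (r + 1)
          = Nat.choose (m - t) r + Nat.choose (m - t) (r + 1) :=
        Nat.choose_succ_succ' _ _
      have e2 : m + 1 - (t + 1) = m - t := by omega
      rw [e2]
      have e4 : Nat.choose (m + 1 + (t + 1)) (r + 1)
          = Nat.choose (m + 1 + t) r + Nat.choose (m + 1 + t) (r + 1) := by
        rw [show m + 1 + (t + 1) = (m + 1 + t) + 1 from rfl]
        exact Nat.choose_succ_succ' _ _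
      have mono : Nat.choose (m - t) r ≤ Nat.choose (m + 1 + t) r :=
        Nat.choose_le_choose _ (by omega)
      omega
    · have e : m + 1 - t = 0 := by omega
      have e2 : m + 1 - (t + 1) = 0 := by omega
      have mono : Nat.choose (m + 1 + t) (r + 1) ≤ Nat.choose (m + 1 + (t + 1)) (r + 1) :=
        Nat.choose_le_choose _ (by omega)
      rw [e] at ih
      rw [e2]
      omega

private lemma pair_lt (m r a b : ℕ) (hm : r ≤ m) (hab : 2 * m + 2 ≤ a + b) :
    2 * Nat.choose m (r + 1) < Nat.choose a (r + 1) + Nat.choose b (r + 1) := by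
  wlog hba : b ≤ a generalizing a b
  · have := this b a (by omega) (by omega); omega
  have ha : m + 1 ≤ a := by omega
  have h1 := convex_pair m r (a - (m + 1))
  have e : m + 1 + (a - (m + 1)) = a := by omega
  rw [e] at h1
  have h2 : Nat.choose (m + 1 - (a - (m + 1))) (r + 1) ≤ Nat.choose b (r + 1) :=
    Nat.choose_le_choose _ (by omega)
  have h3 : Nat.choose (m + 1) (r + 1) = Nat.choose m r + Nat.choose m (r + 1) :=
    Nat.choose_succ_succ' _ _
  have h4 : 0 < Nat.choose m r := Nat.choose_pos hm
  omega

private lemma choose_sub_sum (n r : ℕ) :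
    ∀ s : ℕ, s ≤ n →
      Nat.choose n (r + 1) =
        Nat.choose (n - s) (r + 1) + ∑ i ∈ Finset.range s, Nat.choose (n - 1 - i) r := by
  intro s
  induction s with
  | zero => simp
  | succ s ih =>
    intro hsn
    have ih' := ih (by omega)
    rw [Finset.sum_range_succ]
    have e1 : n - s = (n - (s + 1)) + 1 := by omega
    rw [e1, Nat.choose_succ_succ'] at ih'
    have e3 : n - 1 - s = n - (s + 1) := by omega
    rw [e3]
    omega

/-- For positive integers `n, k, s` with `k ≥ 2` and `n ≥ (s+1)(k + 1/2)`
(equivalently `2n ≥ (s+1)(2k+1)`), the family `𝒜` of all `k`-subsets of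
`[(s+1)k - 1]` is strictly smaller than the family `ℬ` of `k`-subsets of `[n]`
meeting `[s]`: `C((s+1)k-1, k) < C(n,k) - C(n-s, k)`, stated equivalently as
`C((s+1)k-1, k) + C(n-s, k) < C(n, k)`. -/
theorem stmt0 (n k s : ℕ) (hn : 0 < n) (hk : 2 ≤ k) (hs : 0 < s)
    (h : (s + 1) * (2 * k + 1) ≤ 2 * n) :
    Nat.choose ((s + 1) * k - 1) k + Nat.choose (n - s) k < Nat.choose n k := by
  set K := (s + 1) * k with hKdef
  set m := K - 1 with hmdef
  have hK1 : 2 * k ≤ K := Nat.mul_le_mul_right k (by omega)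
  have hK2 : (s + 1) * 2 ≤ K := Nat.mul_le_mul_left (s + 1) (by omega)
  have hh : 2 * K + (s + 1) ≤ 2 * n := by
    have : (s + 1) * (2 * k + 1) = 2 * K + (s + 1) := by rw [hKdef]; ring
    omega
  have hm1 : m + 1 = K := by omega
  have hkk : k - 1 + 1 = k := by omega
  -- Identity: C(m, k) = s * C(m, k-1)
  have t1 := Nat.add_one_mul_choose_eq m (k - 1)
  rw [hkk] at t1
  -- t1 : (m+1) * C(m, k-1) = C(m+1, k) * k
  have t2 : Nat.choose (m + 1) k = Nat.choose m (k - 1) + Nat.choose m k := by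
    rw [← hkk]; exact Nat.choose_succ_succ' _ _
  have t3 : Nat.succ m * Nat.choose m (k - 1) = ((s + 1) * Nat.choose m (k - 1)) * k := by
    rw [Nat.succ_eq_add_one, hm1, hKdef]; ring
  have t4 : (s + 1) * Nat.choose m (k - 1) = Nat.choose (m + 1) k := by
    apply Nat.eq_of_mul_eq_mul_right (show 0 < k by omega)
    rw [← t3]; exact t1
  have t5 : (s + 1) * Nat.choose m (k - 1)
      = s * Nat.choose m (k - 1) + Nat.choose m (k - 1) := by ring
  have idA : Nat.choose m k = s * Nat.choose m (k - 1) := by omega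
  -- decomposition of C(n, k)
  have hsn : s ≤ n := by omega
  have idB := choose_sub_sum n (k - 1) s hsn
  rw [hkk] at idB
  set S := ∑ i ∈ Finset.range s, Nat.choose (n - 1 - i) (k - 1) with hSdef
  -- reflected sum
  have hrefl : (∑ j ∈ Finset.range s, Nat.choose (n - s + j) (k - 1)) = S := by
    rw [hSdef, ← Finset.sum_range_reflect (fun j => Nat.choose (n - s + j) (k - 1)) s]
    apply Finset.sum_congr rfl
    intro j hj
    rw [Finset.mem_range] at hj
    congr 1
    omega
  -- strict pairing bound
  have key : ∑ i ∈ Finset.range s, (2 * Nat.choose m (k - 1))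
      < ∑ i ∈ Finset.range s,
          (Nat.choose (n - 1 - i) (k - 1) + Nat.choose (n - s + i) (k - 1)) := by
    apply Finset.sum_lt_sum_of_nonempty (Finset.nonempty_range_iff.mpr (by omega))
    intro i hi
    rw [Finset.mem_range] at hi
    have hk2 : k - 1 = (k - 2) + 1 := by omega
    rw [hk2]
    exact pair_lt m (k - 2) _ _ (by omega) (by omega)
  rw [Finset.sum_add_distrib, hrefl, Finset.sum_const, Finset.card_range,
    smul_eq_mul] at key
  -- key : s * (2 * C(m,k-1)) < S + S
  have hmul : s * (2 * Nat.choose m (k - 1)) = 2 * (s * Nat.choose m (k - 1)) := by ring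
  omega
end

section
/- Let k ≥ 5, s > 101k^3 be integers, ε = 1/(100k), and let n̄ be a positive integer with n̄ < ε(s+1) + 1. For integers 1 ≤ c ≤ d ≤ k, define w_{c,d} = C(n̄, k-d)/C(s-c, k-c). Then w_{c,d} ≤ (1 + 1/k) · ε^{k-d} / s^{d-c} · (k-c)!/(k-d)!. -/
set_option maxHeartbeats 1000000 in
lemma aux_pow (x : ℝ) (hx : 0 ≤ x) : ∀ n : ℕ, (1 + x) ^ n * (1 - n * x) ≤ 1 := by
  intro n
  induction n with
  | zero => norm_num
  | succ n ih =>
    have hp : (0:ℝ) ≤ (1 + x) ^ n := by positivity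
    have heq : (1 + x) ^ (n + 1) * (1 - ((n:ℝ) + 1) * x)
        = (1 + x) ^ n * (1 - n * x) - (1 + x) ^ n * (((n:ℝ)+1) * x^2) := by
      ring
    push_cast
    rw [heq]
    nlinarith [mul_nonneg hp (mul_nonneg (by positivity : (0:ℝ) ≤ (n:ℝ)+1) (sq_nonneg x))]

set_option maxHeartbeats 1000000 in
/-- Weight bound: for `k ≥ 5`, `s > 101k³`, `ε = 1/(100k)`, `n̄ < ε(s+1)+1` and
`1 ≤ c ≤ d ≤ k`, we have
`w_{c,d} = C(n̄,k-d)/C(s-c,k-c) ≤ (1+1/k)·ε^{k-d}/s^{d-c}·(k-c)!/(k-d)!`. -/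
theorem stmt3 (k s nbar c d : ℕ) (hk : 5 ≤ k) (hs : 101 * k ^ 3 < s)
    (hnbar : 0 < nbar)
    (hnbar' : (nbar : ℝ) < (1 / (100 * (k : ℝ))) * (s + 1) + 1)
    (hc : 1 ≤ c) (hcd : c ≤ d) (hdk : d ≤ k) :
    (Nat.choose nbar (k - d) : ℝ) / (Nat.choose (s - c) (k - c) : ℝ) ≤
      (1 + 1 / (k : ℝ)) * (1 / (100 * (k : ℝ))) ^ (k - d) / (s : ℝ) ^ (d - c) *
        ((Nat.factorial (k - c) : ℝ) / (Nat.factorial (k - d) : ℝ)) := by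
  have hk3 : k ≤ k ^ 3 := Nat.le_self_pow (by norm_num) k
  have hklt : k < s := by
    calc k ≤ k ^ 3 := hk3
      _ ≤ 101 * k ^ 3 := Nat.le_mul_of_pos_left _ (by norm_num)
      _ < s := hs
  have hks : k ≤ s := hklt.le
  obtain ⟨m1, hm1⟩ : ∃ m1, m1 = k - d := ⟨_, rfl⟩
  obtain ⟨m2, hm2⟩ : ∃ m2, m2 = k - c := ⟨_, rfl⟩
  obtain ⟨e, hee⟩ : ∃ e, e = d - c := ⟨_, rfl⟩
  rw [← hm1, ← hm2, ← hee]
  have hme : m2 = m1 + e := by omega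
  have hm2k : m2 ≤ k - 1 := by omega
  have hkr : (5:ℝ) ≤ (k:ℝ) := by exact_mod_cast hk
  have hkpos : (0:ℝ) < k := by linarith
  have hkne : (k:ℝ) ≠ 0 := ne_of_gt hkpos
  have hkltr : (k:ℝ) < (s:ℝ) := by exact_mod_cast hklt
  have hsr : 101 * (k:ℝ)^3 < s := by exact_mod_cast hs
  have hspos : (0:ℝ) < s := by linarith
  obtain ⟨P, hP⟩ : ∃ P, P = s + 1 - k := ⟨_, rfl⟩
  have hPr : (P:ℝ) = (s:ℝ) + 1 - k := by
    have h : (P:ℕ) + k = s + 1 := by omega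
    have := congrArg (Nat.cast (R := ℝ)) h
    push_cast at this; linarith
  have hPpos : (0:ℝ) < P := by rw [hPr]; linarith
  -- binomial bounds
  have hnum : (Nat.choose nbar m1 : ℝ) ≤ (nbar:ℝ)^m1 / (Nat.factorial m1 : ℝ) :=
    Nat.choose_le_pow_div m1 nbar
  have hden : ((P:ℝ))^m2 / (Nat.factorial m2 : ℝ) ≤ (Nat.choose (s - c) m2 : ℝ) := by
    have h := Nat.pow_le_choose (α := ℝ) m2 (s - c)
    have heq : s - c + 1 - m2 = P := by omega
    rw [heq] at h
    exact_mod_cast h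
  have hF1 : (0:ℝ) < (Nat.factorial m1 : ℝ) := by exact_mod_cast (Nat.factorial_pos m1)
  have hF2 : (0:ℝ) < (Nat.factorial m2 : ℝ) := by exact_mod_cast (Nat.factorial_pos m2)
  have hdenpos : (0:ℝ) < ((P:ℝ))^m2 / (Nat.factorial m2 : ℝ) := by positivity
  have step1 : (Nat.choose nbar m1 : ℝ) / (Nat.choose (s - c) m2 : ℝ) ≤
      ((nbar:ℝ)^m1 / (Nat.factorial m1 : ℝ)) / (((P:ℝ))^m2 / (Nat.factorial m2 : ℝ)) :=
    div_le_div₀ (by positivity) hnum hdenpos hden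
  -- key inequality
  obtain ⟨ε, hε⟩ : ∃ ε : ℝ, ε = 1 / (100 * (k:ℝ)) := ⟨_, rfl⟩
  rw [← hε]
  have hεpos : 0 < ε := by rw [hε]; positivity
  have key : (nbar:ℝ)^m1 * (s:ℝ)^e ≤ (1 + 1/(k:ℝ)) * ε^m1 * ((P:ℝ))^m2 := by
    obtain ⟨Q, hQdef⟩ : ∃ Q : ℝ, Q = (s:ℝ) + 100*k + 1 := ⟨_, rfl⟩
    have hQ : (nbar:ℝ) ≤ ε * Q := by
      have heq2 : (1 / (100 * (k:ℝ))) * (s + 1) + 1 = ε * Q := by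
        rw [hε, hQdef]; field_simp; ring
      linarith [hnbar'.le, heq2.le]
    have hQpos : 0 < Q := by rw [hQdef]; positivity
    have hsleQ : (s:ℝ) ≤ Q := by rw [hQdef]; linarith
    have h1 : (nbar:ℝ)^m1 ≤ ε^m1 * Q^m1 := by
      rw [← mul_pow]
      exact pow_le_pow_left₀ (Nat.cast_nonneg nbar) hQ m1
    have h2 : (s:ℝ)^e ≤ Q^e := pow_le_pow_left₀ hspos.le hsleQ e
    have h3 : (nbar:ℝ)^m1 * (s:ℝ)^e ≤ ε^m1 * Q^m2 := by
      rw [hme, pow_add, ← mul_assoc]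
      exact mul_le_mul h1 h2 (by positivity) (by positivity)
    refine h3.trans ?_
    have hQP : Q^m2 ≤ (1 + 1/(k:ℝ)) * ((P:ℝ))^m2 := by
      obtain ⟨x, hx⟩ : ∃ x : ℝ, x = 101 * k / P := ⟨_, rfl⟩
      have hxpos : 0 ≤ x := by rw [hx]; positivity
      have hPx : (P:ℝ) * x = 101 * k := by
        rw [hx]; field_simp
      have hQeq : Q = (P:ℝ) * (1 + x) := by
        rw [mul_add, mul_one, hPx, hPr, hQdef]; ring
      have hP101 : 101*(k:ℝ)*((k:ℝ)^2-1) ≤ (P:ℝ) := by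
        rw [hPr]; nlinarith
      have hxk2 : ((k:ℝ)-1) * x * ((k:ℝ)+1) ≤ 1 := by
        have h5 : (((k:ℝ)-1) * x * ((k:ℝ)+1)) * P = 101*(k:ℝ)*((k:ℝ)^2-1) := by
          calc (((k:ℝ)-1) * x * ((k:ℝ)+1)) * P = (((k:ℝ)-1) * ((k:ℝ)+1)) * ((P:ℝ) * x) := by ring
            _ = 101*(k:ℝ)*((k:ℝ)^2-1) := by rw [hPx]; ring
        have h6 : (((k:ℝ)-1) * x * ((k:ℝ)+1)) * P ≤ 1 * P := by
          rw [h5, one_mul]; exact hP101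
        exact le_of_mul_le_mul_right h6 hPpos
      have hu : (0:ℝ) ≤ ((k:ℝ)-1) * x := mul_nonneg (by linarith) hxpos
      have hpos2 : (0:ℝ) < 1 - ((k:ℝ)-1) * x := by
        nlinarith [mul_nonneg hu (by linarith : (0:ℝ) ≤ (k:ℝ) - 5)]
      have hbound : (1 + x)^(k-1) ≤ 1 + 1/(k:ℝ) := by
        have haux := aux_pow x hxpos (k-1)
        have hcast : ((k-1 : ℕ) : ℝ) = (k:ℝ) - 1 := by
          have h1k : (1:ℕ) ≤ k := by omega
          push_cast [h1k]; ring
        rw [hcast] at haux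
        have h4 : (1 + x)^(k-1) ≤ 1 / (1 - ((k:ℝ)-1)*x) := by
          rw [le_div_iff₀ hpos2]; exact haux
        refine h4.trans ?_
        rw [div_le_iff₀ hpos2]
        have heq4 : (1 + 1/(k:ℝ)) * (1 - ((k:ℝ)-1)*x) = (((k:ℝ)+1) * (1 - ((k:ℝ)-1)*x)) / k := by
          field_simp
        rw [heq4, le_div_iff₀ hkpos, one_mul]
        nlinarith [hxk2]
      have hmono : (1 + x)^m2 ≤ (1 + x)^(k-1) :=
        pow_le_pow_right₀ (by linarith) hm2k
      calc Q^m2 = ((P:ℝ))^m2 * (1+x)^m2 := by rw [hQeq, mul_pow]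
        _ ≤ ((P:ℝ))^m2 * (1 + 1/(k:ℝ)) :=
            mul_le_mul_of_nonneg_left (hmono.trans hbound) (by positivity)
        _ = (1 + 1/(k:ℝ)) * ((P:ℝ))^m2 := by ring
    calc ε^m1 * Q^m2 ≤ ε^m1 * ((1 + 1/(k:ℝ)) * ((P:ℝ))^m2) :=
          mul_le_mul_of_nonneg_left hQP (by positivity)
      _ = (1 + 1/(k:ℝ)) * ε^m1 * ((P:ℝ))^m2 := by ring
  -- finish
  refine step1.trans ?_
  rw [div_le_iff₀ hdenpos]
  have hsene : ((s:ℝ))^e ≠ 0 := by positivity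
  have hrhs : (1 + 1 / (k : ℝ)) * ε ^ m1 / (s : ℝ) ^ e *
        ((Nat.factorial m2 : ℝ) / (Nat.factorial m1 : ℝ)) * (((P:ℝ))^m2 / (Nat.factorial m2 : ℝ))
      = ((1 + 1/(k:ℝ)) * ε^m1 * ((P:ℝ))^m2) * (1 / ((s:ℝ)^e * (Nat.factorial m1 : ℝ))) := by
    field_simp
  have hlhs : (nbar:ℝ)^m1 / (Nat.factorial m1 : ℝ)
      = ((nbar:ℝ)^m1 * (s:ℝ)^e) * (1 / ((s:ℝ)^e * (Nat.factorial m1 : ℝ))) := by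
    field_simp
  rw [hrhs, hlhs]
  exact mul_le_mul_of_nonneg_right key (by positivity)
end

section
/- Let k ≥ 2 and 1 ≤ c ≤ d ≤ k be integers. The number of subsets T of a ground set partitioned into blocks G_0, B_1, ..., B_k with |G_0| = k-1 and |B_i| = k for all i, such that |T| = d and T intersects exactly c of the blocks B_1, ..., B_k, is at most C(k,c) · k^{2d-c} / (d-c)!. -/
/-!
Group the sets `T` according to the set `S` of blocks they meet, `|S| = c`. Such a `T` is the union
of one chosen point in each block `B i`, `i ∈ S` (distinct points, as the blocks are disjoint), with `d - c` further points of `G₀ ∪ ⋃_{i ∈ S} B i`,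
so there are at most `k ^ c * C(k - 1 + c k, d - c)` of them. When `c < d ≤ k` we have
`k - 1 + c k ≤ k²`, and `C(n, m) ≤ n ^ m / m!` gives the bound.
-/

open Finset Function

section MetBlocks

variable {α ι : Type*} [DecidableEq α] [Fintype ι]

def metBlocks (B : ι → Finset α) (T : Finset α) : Finset ι :=
  univ.filter fun i => (T ∩ B i).Nonempty

theorem mem_metBlocks {B : ι → Finset α} {T : Finset α} {i : ι} :
    i ∈ metBlocks B T ↔ (T ∩ B i).Nonempty := by
  simp [metBlocks]

theorem filter_metBlocks_eq_subset_image [DecidableEq ι] (G0 : Finset α) (B : ι → Finset α)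
    (hdisj : Pairwise (Disjoint on B)) (S : Finset ι) (d : ℕ) :
    {T ∈ (G0 ∪ univ.biUnion B).powerset | #T = d ∧ metBlocks B T = S} ⊆
      (Fintype.piFinset (fun i : S => B i) ×ˢ powersetCard (d - #S) (G0 ∪ S.biUnion B)).image
        fun p => univ.image p.1 ∪ p.2 := by
  intro T hT
  simp only [mem_filter, mem_powerset] at hT
  obtain ⟨hTsub, rfl, rfl⟩ := hT
  choose f hf using fun i : metBlocks B T => mem_metBlocks.mp i.2
  have hfT : univ.image f ⊆ T := by
    simp only [image_subset_iff, mem_univ, forall_const]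
    exact fun i => (mem_inter.mp (hf i)).1
  have hf_inj : Function.Injective f := fun i j hij => by
    by_contra hne
    exact disjoint_left.mp (hdisj (Subtype.coe_ne_coe.mpr hne)) (mem_inter.mp (hf i)).2
      (hij ▸ (mem_inter.mp (hf j)).2)
  refine mem_image.mpr ⟨(f, T \ univ.image f), mem_product.mpr ⟨?_, ?_⟩,
    union_sdiff_of_subset hfT⟩
  · exact Fintype.mem_piFinset.mpr fun i => (mem_inter.mp (hf i)).2
  · refine mem_powersetCard.mpr ⟨fun a ha => ?_, ?_⟩
    · obtain ⟨haT, -⟩ := mem_sdiff.mp ha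
      rcases mem_union.mp (hTsub haT) with haG | haB
      · exact mem_union_left _ haG
      · obtain ⟨i, -, hai⟩ := mem_biUnion.mp haB
        exact mem_union_right _
          (mem_biUnion.mpr ⟨i, mem_metBlocks.mpr ⟨a, mem_inter.mpr ⟨haT, hai⟩⟩, hai⟩)
    · rw [card_sdiff_of_subset hfT, card_image_of_injective _ hf_inj, card_univ,
        Fintype.card_coe]

theorem card_filter_metBlocks_eq_le [DecidableEq ι] (G0 : Finset α) (B : ι → Finset α)
    (hdisj : Pairwise (Disjoint on B)) {m k : ℕ} (hG0 : #G0 ≤ m) (hB : ∀ i, #(B i) ≤ k)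
    (S : Finset ι) (d : ℕ) :
    #{T ∈ (G0 ∪ univ.biUnion B).powerset | #T = d ∧ metBlocks B T = S} ≤
      k ^ #S * (m + #S * k).choose (d - #S) := by
  refine (card_le_card (filter_metBlocks_eq_subset_image G0 B hdisj S d)).trans
    (card_image_le.trans ?_)
  rw [card_product, Fintype.card_piFinset, prod_coe_sort (f := fun i => #(B i)),
    card_powersetCard]
  have hunion : #(G0 ∪ S.biUnion B) ≤ m + #S * k :=
    (card_union_le _ _).trans (add_le_add hG0 (card_biUnion_le_card_mul _ _ _ fun i _ => hB i))
  exact Nat.mul_le_mul (prod_le_pow_card _ _ _ fun i _ => hB i) (Nat.choose_le_choose _ hunion)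

theorem card_filter_card_metBlocks_eq_le [DecidableEq ι] (G0 : Finset α) (B : ι → Finset α)
    (hdisj : Pairwise (Disjoint on B)) {m k : ℕ} (hG0 : #G0 ≤ m) (hB : ∀ i, #(B i) ≤ k)
    (c d : ℕ) :
    #{T ∈ (G0 ∪ univ.biUnion B).powerset | #T = d ∧ #(metBlocks B T) = c} ≤
      (Fintype.card ι).choose c * (k ^ c * (m + c * k).choose (d - c)) := by
  have hcover : {T ∈ (G0 ∪ univ.biUnion B).powerset | #T = d ∧ #(metBlocks B T) = c} ⊆
      (powersetCard c univ).biUnion fun S =>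
        {T ∈ (G0 ∪ univ.biUnion B).powerset | #T = d ∧ metBlocks B T = S} := by
    intro T hT
    simp only [mem_filter] at hT
    exact mem_biUnion.mpr ⟨metBlocks B T, mem_powersetCard_univ.mpr hT.2.2,
      mem_filter.mpr ⟨hT.1, hT.2.1, rfl⟩⟩
  calc _ ≤ _ := card_le_card hcover
    _ ≤ _ := card_biUnion_le
    _ ≤ #(powersetCard c (univ : Finset ι)) • (k ^ c * (m + c * k).choose (d - c)) := by
        refine sum_le_card_nsmul _ _ _ fun S hS => ?_
        rw [← (mem_powersetCard_univ.mp hS)]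
        exact card_filter_metBlocks_eq_le G0 B hdisj hG0 hB S d
    _ = _ := by rw [card_powersetCard, card_univ, smul_eq_mul]

end MetBlocks

theorem choose_sub_le_sq_pow_div {k c d : ℕ} (hcd : c ≤ d) (hdk : d ≤ k) :
    ((k - 1 + c * k).choose (d - c) : ℝ) ≤ (k : ℝ) ^ (2 * (d - c)) / (d - c).factorial := by
  rcases hcd.eq_or_lt with rfl | hlt
  · simp
  have hsq : k - 1 + c * k ≤ k ^ 2 :=
    calc k - 1 + c * k ≤ (c + 1) * k := by rw [add_mul, one_mul]; omega
      _ ≤ k ^ 2 := by rw [sq]; exact Nat.mul_le_mul_right k (by omega)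
  calc ((k - 1 + c * k).choose (d - c) : ℝ)
      ≤ ((k - 1 + c * k : ℕ) : ℝ) ^ (d - c) / (d - c).factorial := Nat.choose_le_pow_div _ _
    _ ≤ ((k ^ 2 : ℕ) : ℝ) ^ (d - c) / (d - c).factorial := by gcongr
    _ = (k : ℝ) ^ (2 * (d - c)) / (d - c).factorial := by push_cast; rw [pow_mul]

theorem stmt5_general {α : Type*} [DecidableEq α] (k c d : ℕ)
    (hcd : c ≤ d) (hdk : d ≤ k)
    (G0 : Finset α) (B : Fin k → Finset α)
    (hG0 : G0.card = k - 1) (hB : ∀ i, (B i).card = k)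
    (hdisj : ∀ i j, i ≠ j → Disjoint (B i) (B j)) :
    ((((G0 ∪ Finset.univ.biUnion B).powerset).filter
        (fun T => T.card = d ∧
          (Finset.univ.filter (fun i => (T ∩ B i).Nonempty)).card = c)).card : ℝ) ≤
      (Nat.choose k c : ℝ) * (k : ℝ) ^ (2 * d - c) / (Nat.factorial (d - c) : ℝ) := by
  have hcount := card_filter_card_metBlocks_eq_le G0 B (fun i j => hdisj i j) hG0.le
    (fun i => (hB i).le) c d
  rw [Fintype.card_fin] at hcount
  calc _ ≤ (k.choose c : ℝ) * ((k : ℝ) ^ c * (k - 1 + c * k).choose (d - c)) := by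
        exact_mod_cast hcount
    _ ≤ (k.choose c : ℝ) * ((k : ℝ) ^ c * ((k : ℝ) ^ (2 * (d - c)) / (d - c).factorial)) := by
        gcongr
        exact choose_sub_le_sq_pow_div hcd hdk
    _ = _ := by
        rw [show 2 * d - c = c + 2 * (d - c) by omega, pow_add]
        ring

/-- Bound on `N_{c,d}`: with pairwise disjoint blocks `G₀, B₁, ..., B_k`,
`|G₀| = k-1`, `|B_i| = k`, the number of `d`-element subsets `T` of the union
intersecting exactly `c` of the blocks `B₁, ..., B_k` is at most
`C(k,c)·k^{2d-c}/(d-c)!` (as a real-number inequality). -/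
theorem stmt5 {α : Type*} [DecidableEq α] (k c d : ℕ) (hk : 2 ≤ k)
    (hc : 1 ≤ c) (hcd : c ≤ d) (hdk : d ≤ k)
    (G0 : Finset α) (B : Fin k → Finset α)
    (hG0 : G0.card = k - 1) (hB : ∀ i, (B i).card = k)
    (hdisj : ∀ i j, i ≠ j → Disjoint (B i) (B j))
    (hdisj0 : ∀ i, Disjoint G0 (B i)) :
    ((((G0 ∪ Finset.univ.biUnion B).powerset).filter
        (fun T => T.card = d ∧
          (Finset.univ.filter (fun i => (T ∩ B i).Nonempty)).card = c)).card : ℝ) ≤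
      (Nat.choose k c : ℝ) * (k : ℝ) ^ (2 * d - c) / (Nat.factorial (d - c) : ℝ) :=
  stmt5_general k c d hcd hdk G0 B hG0 hB hdisj
end

section
/- Let k ≥ 5 and s > 101k^3 be integers and ε = 1/(100k). For each g = 0, 1, ..., k-2: Σ_{c=1}^{k-g-1} Σ_{d=c+g}^{k-1} w_{c,d} · C(k,c) · k^{2d-c}/(d-c)! ≤ (1 + 2/k) · k^{k+2g}/(s^g · g!) · ε, where w_{c,d} ≤ (1+1/k) · ε^{k-d}/s^{d-c} · (k-c)!/(k-d)! (use this upper bound for w_{c,d}). -/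
/-!
Put `d = c + j`. The summand then factors as `(1 + 1/k) · C(k,j) · (k²/s)^j` times the binomial
term `C(k-j,c) · k^c · ε^(k-j-c)`, so the sum over `c` is at most
`(k + ε)^(k-j) - k^(k-j) ≤ (k-j) · ε · (k + ε)^(k-j-1) ≤ ε · e^ε · k^(k-j)`. Together with
`C(k,j) ≤ k^j / j!` the `j`-th block is at most `(1 + 1/k) · ε · e^ε · k^k · (k²/s)^j / j!`.
As `k²/s < 1/(101k)`, the sum over `j ≥ g` is its first term times a geometric factor, and
`(1 + 1/k) · e^(1/(100k)) · (1 - 1/(101k))⁻¹ ≤ 1 + 2/k`.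
-/

open Finset
open scoped Nat

lemma add_pow_sub_pow_le {x y : ℝ} (hx : 0 ≤ x) (hy : 0 ≤ y) (n : ℕ) :
    (y + x) ^ n - y ^ n ≤ n * x * (y + x) ^ (n - 1) := by
  have hxy : 0 ≤ y + x := by linarith
  have h := abs_pow_sub_pow_le (y + x) y n
  rw [add_sub_cancel_left, abs_of_nonneg hx, abs_of_nonneg hxy, abs_of_nonneg hy,
    max_eq_left (by linarith)] at h
  linarith [le_abs_self ((y + x) ^ n - y ^ n)]

lemma sum_Icc_choose_mul_pow_le {x y : ℝ} (hx : 0 ≤ x) (hy : 0 ≤ y) (n : ℕ) :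
    ∑ c ∈ Icc 1 (n - 1), (n.choose c : ℝ) * y ^ c * x ^ (n - c) ≤
      n * x * (y + x) ^ (n - 1) := by
  have hsub : Icc 1 (n - 1) ⊆ range n := fun c hc => by
    simp only [mem_Icc, mem_range] at hc ⊢; omega
  have hbinom : ∑ c ∈ range n, (n.choose c : ℝ) * y ^ c * x ^ (n - c) = (y + x) ^ n - y ^ n := by
    rw [add_pow, sum_range_succ]
    simp only [Nat.sub_self, pow_zero, mul_one, Nat.choose_self, Nat.cast_one]
    rw [add_sub_cancel_right]
    exact sum_congr rfl fun c _ => by ring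
  calc _ ≤ ∑ c ∈ range n, (n.choose c : ℝ) * y ^ c * x ^ (n - c) :=
        sum_le_sum_of_subset_of_nonneg hsub fun _ _ _ => by positivity
    _ ≤ _ := hbinom ▸ add_pow_sub_pow_le hx hy n

lemma add_pow_le_pow_mul_exp {x y : ℝ} (hx : 0 ≤ x) (hy : 0 < y) (m : ℕ) :
    (y + x) ^ m ≤ y ^ m * Real.exp (m * x / y) := by
  have h : y + x ≤ y * Real.exp (x / y) := by
    have := Real.add_one_le_exp (x / y)
    calc y + x = y * (x / y + 1) := by field_simp; ring
      _ ≤ _ := by gcongr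
  calc (y + x) ^ m ≤ (y * Real.exp (x / y)) ^ m := pow_le_pow_left₀ (by linarith) h m
    _ = _ := by rw [mul_pow, ← Real.exp_nat_mul, mul_div_assoc]

lemma natCast_mul_pow_pred_le {K : ℝ} {n : ℕ} (hn : (n : ℝ) ≤ K) :
    n * K ^ (n - 1) ≤ K ^ n := by
  rcases n with _ | n
  · simp
  · have hK : 0 ≤ K := le_trans (by positivity) hn
    rw [Nat.add_sub_cancel, pow_succ']
    gcongr

lemma pow_div_factorial_le_mul_pow_sub {x : ℝ} (hx : 0 ≤ x) {g j : ℕ} (hgj : g ≤ j) :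
    x ^ j / j ! ≤ x ^ g / g ! * x ^ (j - g) := by
  rw [div_mul_eq_mul_div, ← pow_add, Nat.add_sub_cancel' hgj]
  gcongr

lemma sum_Icc_pow_div_factorial_le {x : ℝ} (hx0 : 0 ≤ x) (hx1 : x < 1) (g m : ℕ) :
    ∑ j ∈ Icc g m, x ^ j / j ! ≤ x ^ g / g ! * (1 - x)⁻¹ := by
  have hgeom : ∑ j ∈ Icc g m, x ^ (j - g) ≤ (1 - x)⁻¹ := by
    rw [← Ico_add_one_right_eq_Icc, sum_Ico_eq_sum_range]
    simp only [Nat.add_sub_cancel_left]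
    simpa using geom_sum_Ico_le_of_lt_one (m := 0) (n := m + 1 - g) hx0 hx1
  calc ∑ j ∈ Icc g m, x ^ j / j ! ≤ ∑ j ∈ Icc g m, x ^ g / g ! * x ^ (j - g) :=
        sum_le_sum fun j hj => pow_div_factorial_le_mul_pow_sub hx0 (mem_Icc.1 hj).1
    _ ≤ _ := by rw [← mul_sum]; gcongr

lemma sum_Icc_Icc_eq_sum_Icc_Icc_add {M : Type*} [AddCommMonoid M] (a m g : ℕ) (f : ℕ → ℕ → M) :
    ∑ c ∈ Icc a (m - g), ∑ d ∈ Icc (c + g) m, f c d =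
      ∑ j ∈ Icc g (m - a), ∑ c ∈ Icc a (m - j), f c (c + j) := by
  rw [sum_sigma', sum_sigma']
  refine sum_nbij' (fun p => ⟨p.2 - p.1, p.1⟩) (fun p => ⟨p.2, p.2 + p.1⟩) ?_ ?_ ?_ ?_ ?_ <;>
    rintro ⟨c, d⟩ h <;> simp only [mem_sigma, mem_Icc] at h ⊢
  · omega
  · omega
  · rw [Nat.add_sub_cancel' (by omega : c ≤ d)]
  · rw [Nat.add_sub_cancel_left]
  · rw [Nat.add_sub_cancel' (by omega : c ≤ d)]

lemma factorial_div_factorial_mul_choose_div_factorial {k c j : ℕ} (h : c + j ≤ k) :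
    ((k - c)! : ℝ) / (k - j - c)! * k.choose c / j ! = k.choose j * (k - j).choose c := by
  rw [Nat.cast_choose ℝ (show c ≤ k by omega), Nat.cast_choose ℝ (show j ≤ k by omega),
    Nat.cast_choose ℝ (show c ≤ k - j by omega)]
  field_simp

lemma one_add_inv_mul_exp_mul_inv_one_sub_le {K r : ℝ} (hK : 1 ≤ K) (hr0 : 0 ≤ r)
    (hr : r ≤ 1 / (101 * K)) :
    (1 + 1 / K) * Real.exp (1 / (100 * K)) * (1 - r)⁻¹ ≤ 1 + 2 / K := by
  set u := 1 / K with hu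
  have hu0 : 0 < u := by positivity
  have hu1 : u ≤ 1 := by rw [hu, div_le_one (by linarith)]; exact hK
  have hε : 1 / (100 * K) = u / 100 := by rw [hu]; ring
  have hr' : r ≤ u / 101 := by rw [hu]; convert hr using 1; ring
  have hexp : Real.exp (u / 100) ≤ (1 - u / 100)⁻¹ := by
    simpa using Real.exp_bound_div_one_sub_of_interval (by positivity) (by linarith)
  rw [hε, ← div_eq_mul_inv, div_le_iff₀ (by linarith)]
  calc (1 + u) * Real.exp (u / 100) ≤ (1 + u) * (1 - u / 100)⁻¹ := by gcongr
    _ ≤ (1 + 2 * u) * (1 - r) := by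
      rw [← div_eq_mul_inv, div_le_iff₀ (by linarith)]
      nlinarith [mul_nonneg hu0.le (sub_nonneg.2 hu1), mul_nonneg hu0.le hr0]
    _ = (1 + 2 / K) * (1 - r) := by rw [hu]; ring

/-- The paper's `w_{c,d} · N_{c,d}`, with both factors replaced by their upper bounds. -/
noncomputable def weightCount (k s : ℕ) (ε : ℝ) (c d : ℕ) : ℝ :=
  ((1 + 1 / (k : ℝ)) * ε ^ (k - d) / (s : ℝ) ^ (d - c) * (((k - c)! : ℝ) / (k - d)!)) *
    (k.choose c * (k : ℝ) ^ (2 * d - c) / (d - c)!)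

lemma weightCount_add_eq (k s : ℕ) (ε : ℝ) {c j : ℕ} (h : c + j ≤ k) :
    weightCount k s ε c (c + j) =
      (1 + 1 / (k : ℝ)) * k.choose j * ((k : ℝ) ^ 2 / s) ^ j *
        ((k - j).choose c * (k : ℝ) ^ c * ε ^ (k - j - c)) := by
  have hfact := factorial_div_factorial_mul_choose_div_factorial h
  rw [weightCount, Nat.add_sub_cancel_left, show k - (c + j) = k - j - c by omega,
    show 2 * (c + j) - c = c + 2 * j by omega]
  linear_combination
    (1 + 1 / (k : ℝ)) * ε ^ (k - j - c) * ((k : ℝ) ^ 2 / s) ^ j * (k : ℝ) ^ c * hfact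

lemma sum_weightCount_add_le {k : ℕ} (hk : 0 < k) (s : ℕ) {ε : ℝ} (hε : 0 ≤ ε) {j : ℕ}
    (hj : j ≤ k) :
    ∑ c ∈ Icc 1 (k - 1 - j), weightCount k s ε c (c + j) ≤
      (1 + 1 / (k : ℝ)) * ε * Real.exp ε * k ^ k * (((k : ℝ) ^ 2 / s) ^ j / j !) := by
  set n := k - j with hn
  set A := (1 + 1 / (k : ℝ)) * k.choose j * ((k : ℝ) ^ 2 / s) ^ j
  have hK : (0 : ℝ) < k := by exact_mod_cast hk
  have hnk : (n : ℝ) ≤ k := by exact_mod_cast Nat.sub_le k j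
  have hterm : ∀ c ∈ Icc 1 (n - 1),
      weightCount k s ε c (c + j) = A * (n.choose c * (k : ℝ) ^ c * ε ^ (n - c)) :=
    fun c hc => weightCount_add_eq k s ε (by simp only [mem_Icc] at hc; omega)
  have hexp : ((k : ℝ) + ε) ^ (n - 1) ≤ (k : ℝ) ^ (n - 1) * Real.exp ε := by
    refine (add_pow_le_pow_mul_exp hε hK _).trans ?_
    gcongr
    rw [div_le_iff₀ hK, mul_comm ε]
    gcongr
    omega
  rw [show k - 1 - j = n - 1 by omega, sum_congr rfl hterm, ← mul_sum]
  calc A * ∑ c ∈ Icc 1 (n - 1), (n.choose c * (k : ℝ) ^ c * ε ^ (n - c))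
      ≤ A * (n * ε * ((k : ℝ) ^ (n - 1) * Real.exp ε)) := by
        gcongr
        exact (sum_Icc_choose_mul_pow_le hε hK.le n).trans (by gcongr)
    _ = (1 + 1 / (k : ℝ)) * ε * Real.exp ε * (k.choose j * (n * (k : ℝ) ^ (n - 1))) *
          ((k : ℝ) ^ 2 / s) ^ j := by ring
    _ ≤ (1 + 1 / (k : ℝ)) * ε * Real.exp ε * ((k : ℝ) ^ j / j ! * (k : ℝ) ^ n) *
          ((k : ℝ) ^ 2 / s) ^ j := by
        gcongr
        · exact Nat.choose_le_pow_div j k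
        · exact natCast_mul_pow_pred_le hnk
    _ = _ := by
        rw [div_mul_eq_mul_div, ← pow_add, Nat.add_sub_cancel' hj]
        ring

theorem stmt7_general (k s g : ℕ) (hk : 5 ≤ k) (hs : 101 * k ^ 3 < s) :
    ∑ c ∈ Finset.Icc 1 (k - g - 1), ∑ d ∈ Finset.Icc (c + g) (k - 1),
      ((1 + 1 / (k : ℝ)) * (1 / (100 * (k : ℝ))) ^ (k - d) / (s : ℝ) ^ (d - c) *
          ((Nat.factorial (k - c) : ℝ) / (Nat.factorial (k - d) : ℝ))) *
        ((Nat.choose k c : ℝ) * (k : ℝ) ^ (2 * d - c) / (Nat.factorial (d - c) : ℝ)) ≤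
      (1 + 2 / (k : ℝ)) * (k : ℝ) ^ (k + 2 * g) /
        ((s : ℝ) ^ g * (Nat.factorial g : ℝ)) * (1 / (100 * (k : ℝ))) := by
  have hK : (1 : ℝ) ≤ k := by exact_mod_cast (by omega : 1 ≤ k)
  have hS : 101 * (k : ℝ) ^ 3 < s := by exact_mod_cast hs
  set ε := 1 / (100 * (k : ℝ))
  set r := (k : ℝ) ^ 2 / s
  have hr0 : 0 ≤ r := by positivity
  have hr : r ≤ 1 / (101 * k) := by
    rw [div_le_div_iff₀ (by linarith [pow_pos (show (0 : ℝ) < k by linarith) 3]) (by positivity)]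
    nlinarith
  change ∑ c ∈ Icc 1 (k - g - 1), ∑ d ∈ Icc (c + g) (k - 1), weightCount k s ε c d ≤ _
  rw [show k - g - 1 = k - 1 - g by omega, sum_Icc_Icc_eq_sum_Icc_Icc_add]
  calc _ ≤ ∑ j ∈ Icc g (k - 1 - 1), (1 + 1 / (k : ℝ)) * ε * Real.exp ε * k ^ k * (r ^ j / j !) :=
        sum_le_sum fun j hj => sum_weightCount_add_le (by omega) s (by positivity)
          (by simp only [mem_Icc] at hj; omega)
    _ ≤ (1 + 1 / (k : ℝ)) * ε * Real.exp ε * k ^ k * (r ^ g / g ! * (1 - r)⁻¹) := by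
        rw [← mul_sum]
        gcongr
        exact sum_Icc_pow_div_factorial_le hr0 (hr.trans_lt (by rw [div_lt_one] <;> linarith)) _ _
    _ = (1 + 1 / (k : ℝ)) * Real.exp ε * (1 - r)⁻¹ * (ε * k ^ k * (r ^ g / g !)) := by ring
    _ ≤ (1 + 2 / k) * (ε * k ^ k * (r ^ g / g !)) := by
        gcongr
        exact one_add_inv_mul_exp_mul_inv_one_sub_le hK hr0 hr
    _ = _ := by ring

/-- Weight-sum estimate `W_g ≤ (1+2/k)·k^{k+2g}·ε/(s^g·g!)` for `0 ≤ g ≤ k-2`,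
with `w_{c,d}` replaced by its upper bound `(1+1/k)·ε^{k-d}/s^{d-c}·(k-c)!/(k-d)!`
and `N_{c,d}` by its bound `C(k,c)·k^{2d-c}/(d-c)!`. -/
theorem stmt7 (k s g : ℕ) (hk : 5 ≤ k) (hs : 101 * k ^ 3 < s) (hg : g ≤ k - 2) :
    ∑ c ∈ Finset.Icc 1 (k - g - 1), ∑ d ∈ Finset.Icc (c + g) (k - 1),
      ((1 + 1 / (k : ℝ)) * (1 / (100 * (k : ℝ))) ^ (k - d) / (s : ℝ) ^ (d - c) *
          ((Nat.factorial (k - c) : ℝ) / (Nat.factorial (k - d) : ℝ))) *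
        ((Nat.choose k c : ℝ) * (k : ℝ) ^ (2 * d - c) / (Nat.factorial (d - c) : ℝ)) ≤
      (1 + 2 / (k : ℝ)) * (k : ℝ) ^ (k + 2 * g) /
        ((s : ℝ) ^ g * (Nat.factorial g : ℝ)) * (1 / (100 * (k : ℝ))) :=
  stmt7_general k s g hk hs
end

section
/- Let k ≥ 5 be an integer and let a_0, a_1, ..., a_c be positive integers with c ≥ k - 3, each a_i ≤ 3, and a_0 + a_1 + ... + a_c = k. Then (k - a_0)(k - a_1)···(k - a_c)·k^{k-c} > 3k · (1 + 3/k) · (2/(100k)) · k^{k+1}. -/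
/-!
Write `s = k - (c + 1) ∈ {0, 1, 2}` for the total excess `∑ (a i - 1)`. Each factor satisfies
`(k - 1)(k - 2)^(a - 1) ≤ (k - a) k^(a - 1)`, so the left side is at least
`(k - 1)^(c + 1) (k - 2)^s k ≥ (k - 1)^(k - 2) (k - 2)^2 k`. The right side is `3/50 (k + 3) k^k`,
and `k^(k - 1) ≤ e (k - 1)^(k - 1)` reduces the comparison to `3e (k + 3)(k - 1) < 50 (k - 2)^2`,
true for `k ≥ 5` since `e < 3`.
-/

open Finset Real

lemma sub_one_mul_sub_two_pow_le {K : ℝ} (hK : 4 ≤ K) {a : ℕ} (ha1 : 1 ≤ a) (ha3 : a ≤ 3) :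
    (K - 1) * (K - 2) ^ (a - 1) ≤ (K - a) * K ^ (a - 1) := by
  interval_cases a <;> norm_num <;> nlinarith

lemma sub_one_pow_mul_sub_two_pow_le_prod {ι : Type*} [Fintype ι] {K : ℝ} (hK : 4 ≤ K)
    {a : ι → ℕ} (ha1 : ∀ i, 1 ≤ a i) (ha3 : ∀ i, a i ≤ 3) :
    (K - 1) ^ Fintype.card ι * (K - 2) ^ (∑ i, (a i - 1)) ≤
      (∏ i, (K - a i)) * K ^ (∑ i, (a i - 1)) := by
  rw [← prod_pow_eq_pow_sum, ← prod_pow_eq_pow_sum, ← prod_mul_distrib, ← card_univ,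
    ← prod_const, ← prod_mul_distrib]
  exact prod_le_prod (fun i _ => mul_nonneg (by linarith) (pow_nonneg (by linarith) _))
    fun i _ => sub_one_mul_sub_two_pow_le hK (ha1 i) (ha3 i)

lemma add_one_pow_le_exp_one_mul_pow (n : ℕ) : ((n : ℝ) + 1) ^ n ≤ exp 1 * (n : ℝ) ^ n := by
  rcases Nat.eq_zero_or_pos n with rfl | hn
  · simp
  have : ((n : ℝ) + 1) ^ n = (1 + (n : ℝ)⁻¹) ^ n * (n : ℝ) ^ n := by
    rw [← mul_pow, add_mul, inv_mul_cancel₀ (by positivity), one_mul, add_comm]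
  rw [this]
  exact mul_le_mul_of_nonneg_right one_add_inv_pow_le_exp (by positivity)

lemma pow_mul_pow_le_pow_mul_pow {x y : ℝ} (hy : 0 ≤ y) (hyx : y ≤ x) {m n s t : ℕ}
    (hst : s ≤ t) (h : m + t = n + s) : x ^ m * y ^ t ≤ x ^ n * y ^ s := by
  obtain ⟨d, rfl⟩ := Nat.exists_eq_add_of_le hst
  obtain rfl : n = m + d := by omega
  rw [pow_add, pow_add, mul_assoc, mul_comm (x ^ d)]
  have := hy.trans hyx
  gcongr

lemma three_div_fifty_mul_add_three_mul_pow_lt {k : ℕ} (hk : 5 ≤ k) :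
    3 / 50 * ((k : ℝ) + 3) * (k : ℝ) ^ k < ((k : ℝ) - 1) ^ (k - 2) * ((k : ℝ) - 2) ^ 2 * k := by
  obtain ⟨n, rfl⟩ : ∃ n, k = n + 2 := ⟨k - 2, by omega⟩
  have hn : (3 : ℝ) ≤ n := by exact_mod_cast (by omega : 3 ≤ n)
  have hexp : ((n : ℝ) + 2) ^ (n + 1) ≤ exp 1 * ((n : ℝ) + 1) ^ (n + 1) := by
    exact_mod_cast add_one_pow_le_exp_one_mul_pow (n + 1)
  have hnum : 3 * exp 1 * ((n : ℝ) + 5) * (n + 1) < 50 * n ^ 2 := by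
    nlinarith [exp_one_lt_three]
  have hpos : (0 : ℝ) < ((n : ℝ) + 1) ^ n * (n + 2) := by positivity
  push_cast
  calc 3 / 50 * ((n : ℝ) + 2 + 3) * (n + 2) ^ (n + 2)
      = 3 / 50 * ((n : ℝ) + 5) * (n + 2) * (n + 2) ^ (n + 1) := by ring
    _ ≤ 3 / 50 * ((n : ℝ) + 5) * (n + 2) * (exp 1 * ((n : ℝ) + 1) ^ (n + 1)) := by gcongr
    _ = (3 * exp 1 * ((n : ℝ) + 5) * (n + 1)) * (((n : ℝ) + 1) ^ n * (n + 2)) / 50 := by ring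
    _ < (50 * n ^ 2) * (((n : ℝ) + 1) ^ n * (n + 2)) / 50 := by gcongr
    _ = ((n : ℝ) + 2 - 1) ^ (n + 2 - 2) * ((n : ℝ) + 2 - 2) ^ 2 * (n + 2) := by
      rw [Nat.add_sub_cancel]; ring

/-- Shift-counting inequality: for an integer `k ≥ 5` and positive integers
`a_0, ..., a_c` with `c ≥ k-3`, each `a_i ≤ 3` and `a_0 + ... + a_c = k`:
`(k-a_0)···(k-a_c)·k^{k-c} > 3k·(1+3/k)·(2/(100k))·k^{k+1}`. -/
theorem stmt16 (k c : ℕ) (hk : 5 ≤ k) (hc : k - 3 ≤ c)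
    (a : Fin (c + 1) → ℕ) (ha1 : ∀ i, 1 ≤ a i) (ha3 : ∀ i, a i ≤ 3)
    (hsum : ∑ i, a i = k) :
    (∏ i, ((k : ℝ) - (a i : ℝ))) * (k : ℝ) ^ (k - c) >
      3 * (k : ℝ) * (1 + 3 / (k : ℝ)) * (2 / (100 * (k : ℝ))) * (k : ℝ) ^ (k + 1) := by
  have hK : (4 : ℝ) ≤ k := by exact_mod_cast (by omega : 4 ≤ k)
  have hexcess : ∑ i, (a i - 1) = k - (c + 1) := by
    rw [sum_tsub_distrib _ fun i _ => ha1 i, hsum]; simp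
  have hck : c + 1 ≤ k := by
    simpa [hsum] using sum_le_sum fun i (_ : i ∈ univ) => ha1 i
  have hprod := sub_one_pow_mul_sub_two_pow_le_prod hK ha1 ha3
  rw [hexcess, Fintype.card_fin] at hprod
  have hshift :
      (k - 1 : ℝ) ^ (k - 2) * (k - 2) ^ 2 ≤ (k - 1) ^ (c + 1) * (k - 2) ^ (k - (c + 1)) :=
    pow_mul_pow_le_pow_mul_pow (by linarith) (by linarith) (by omega) (by omega)
  have hrhs :
      3 * (k : ℝ) * (1 + 3 / k) * (2 / (100 * k)) * k ^ (k + 1) = 3 / 50 * (k + 3) * k ^ k := by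
    field_simp; ring
  rw [gt_iff_lt, hrhs, show k - c = k - (c + 1) + 1 by omega, pow_succ, ← mul_assoc]
  calc 3 / 50 * ((k : ℝ) + 3) * k ^ k < (k - 1 : ℝ) ^ (k - 2) * (k - 2) ^ 2 * k :=
        three_div_fifty_mul_add_three_mul_pow_lt hk
    _ ≤ _ := mul_le_mul_of_nonneg_right (hshift.trans hprod) (by positivity)
end

section
/- Let k ≥ 2 and c ≥ 0 be integers and let a_0, a_1, ..., a_c be positive integers with a_0 + a_1 + ... + a_c = k and each a_i < k. Then for every i ∈ {0, ..., c}: (k - a_0)(k - a_1)···(k - a_c)·k^{k-c} ≥ a_i(k - a_i)·k^{k-1}. -/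
/-- Weierstrass-type product inequality. -/
lemma weier {ι : Type*} [DecidableEq ι] (s : Finset ι) (k : ℝ) (hk : 0 ≤ k)
    (a : ι → ℝ) (h0 : ∀ j, 0 ≤ a j) (h1 : ∀ j, a j ≤ k) :
    (∏ j ∈ s, (k - a j)) * k ≥ k ^ s.card * (k - ∑ j ∈ s, a j) := by
  induction s using Finset.induction with
  | empty => simp
  | @insert x s hx ih =>
    rw [Finset.prod_insert hx, Finset.sum_insert hx, Finset.card_insert_of_notMem hx]
    have hax : 0 ≤ k - a x := sub_nonneg.2 (h1 x)
    have hS : 0 ≤ ∑ j ∈ s, a j := Finset.sum_nonneg fun j _ => h0 j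
    have step1 : (k - a x) * ((∏ j ∈ s, (k - a j)) * k)
        ≥ (k - a x) * (k ^ s.card * (k - ∑ j ∈ s, a j)) :=
      mul_le_mul_of_nonneg_left ih hax
    have step2 : (k - a x) * (k ^ s.card * (k - ∑ j ∈ s, a j))
        ≥ k ^ (s.card + 1) * (k - (a x + ∑ j ∈ s, a j)) := by
      have hpow : (0:ℝ) ≤ k ^ s.card := pow_nonneg hk _
      have key : (k - a x) * (k ^ s.card * (k - ∑ j ∈ s, a j))
          - k ^ (s.card + 1) * (k - (a x + ∑ j ∈ s, a j))
          = k ^ s.card * (a x * ∑ j ∈ s, a j) := by ring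
      have hnn : (0:ℝ) ≤ k ^ s.card * (a x * ∑ j ∈ s, a j) :=
        mul_nonneg hpow (mul_nonneg (h0 x) hS)
      linarith
    calc (k - a x) * (∏ j ∈ s, (k - a j)) * k
        = (k - a x) * ((∏ j ∈ s, (k - a j)) * k) := by ring
      _ ≥ (k - a x) * (k ^ s.card * (k - ∑ j ∈ s, a j)) := step1
      _ ≥ k ^ (s.card + 1) * (k - (a x + ∑ j ∈ s, a j)) := step2

/-- For an integer `k ≥ 2` and positive integers `a_0, ..., a_c` with each
`a_i < k` and `a_0 + ... + a_c = k`, for every `i`: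
`(k-a_0)···(k-a_c)·k^{k-c} ≥ a_i·(k-a_i)·k^{k-1}`. -/
theorem stmt17 (k c : ℕ) (hk : 2 ≤ k)
    (a : Fin (c + 1) → ℕ) (ha1 : ∀ i, 1 ≤ a i) (hak : ∀ i, a i < k)
    (hsum : ∑ i, a i = k) (i : Fin (c + 1)) :
    (∏ j, ((k : ℝ) - (a j : ℝ))) * (k : ℝ) ^ (k - c) ≥
      (a i : ℝ) * ((k : ℝ) - (a i : ℝ)) * (k : ℝ) ^ (k - 1) := by
  have hck : c + 1 ≤ k := by
    calc c + 1 = ∑ _j : Fin (c+1), 1 := by simp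
      _ ≤ ∑ j, a j := Finset.sum_le_sum fun j _ => ha1 j
      _ = k := hsum
  have hc : c ≤ k - 1 := by omega
  have hkpos : (0:ℝ) < (k:ℝ) := by positivity
  set s := Finset.univ.erase i with hs
  have hcard : s.card = c := by
    rw [hs, Finset.card_erase_of_mem (Finset.mem_univ i)]; simp
  -- sum over erase
  have hsumR : (∑ j ∈ s, (a j : ℝ)) = (k : ℝ) - (a i : ℝ) := by
    have h := Finset.add_sum_erase Finset.univ (fun j => ((a j : ℝ))) (Finset.mem_univ i)
    have hsR : (∑ j, (a j : ℝ)) = (k : ℝ) := by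
      rw [← Nat.cast_sum, hsum]
    rw [hsR] at h
    linarith
  have hw := weier s (k:ℝ) hkpos.le (fun j => (a j : ℝ))
    (fun j => by positivity) (fun j => by simpa using (Nat.cast_le.2 (hak j).le : ((a j:ℕ):ℝ) ≤ (k:ℝ)))
  rw [hcard, hsumR] at hw
  -- ∏ over s times k ≥ k^c * a i
  have hw' : (∏ j ∈ s, ((k:ℝ) - (a j : ℝ))) * k ≥ (k:ℝ) ^ c * (a i : ℝ) := by
    have : (k:ℝ) - ((k:ℝ) - (a i : ℝ)) = (a i : ℝ) := by ring
    rw [this] at hw; exact hw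
  have hprod : (∏ j, ((k : ℝ) - (a j : ℝ)))
      = ((k:ℝ) - (a i : ℝ)) * ∏ j ∈ s, ((k:ℝ) - (a j : ℝ)) := by
    rw [hs]; exact (Finset.mul_prod_erase Finset.univ _ (Finset.mem_univ i)).symm
  have hkai : (0:ℝ) ≤ (k:ℝ) - (a i : ℝ) := by
    have := hak i; have : (a i : ℝ) ≤ (k:ℝ) := by exact_mod_cast (hak i).le
    linarith
  -- exponent bookkeeping
  have hexp1 : k - c = 1 + (k - c - 1) := by omega
  have hexp2 : k - 1 = c + (k - c - 1) := by omega
  rw [hprod, hexp1, hexp2, pow_add, pow_add, pow_one]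
  have hpow : (0:ℝ) ≤ (k:ℝ) ^ (k - c - 1) := by positivity
  have key : ((k:ℝ) - (a i : ℝ)) * ((∏ j ∈ s, ((k:ℝ) - (a j : ℝ))) * k)
      ≥ ((k:ℝ) - (a i : ℝ)) * ((k:ℝ) ^ c * (a i : ℝ)) :=
    mul_le_mul_of_nonneg_left hw' hkai
  calc ((k:ℝ) - (a i:ℝ)) * (∏ j ∈ s, ((k:ℝ) - (a j:ℝ))) * ((k:ℝ) * (k:ℝ)^(k-c-1))
      = (((k:ℝ) - (a i:ℝ)) * ((∏ j ∈ s, ((k:ℝ) - (a j:ℝ))) * k)) * (k:ℝ)^(k-c-1) := by ring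
    _ ≥ (((k:ℝ) - (a i:ℝ)) * ((k:ℝ) ^ c * (a i : ℝ))) * (k:ℝ)^(k-c-1) :=
        mul_le_mul_of_nonneg_right key hpow
    _ = (a i : ℝ) * ((k:ℝ) - (a i:ℝ)) * ((k:ℝ)^c * (k:ℝ)^(k-c-1)) := by ring
end
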